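/- Let k ≥ 3, m ≥ 0 and n ≥ k−1 be integers. Then #{Δ ∈ P_k(m,n) : d_1 = d_{k−1} ≥ 2, α_1 = d_1 > α_2 ≥ 1, and α_1 − α_2 is even} ≤ #{Δ ∈ P_k(m,n+1) : d_1 = d_{k−1} ≥ 2, 1 ≤ α_1 = α_2 < d_1, and d_1 − α_1 is even}. -/

import Mathlib

/-!
Send `(α, β, γ, ϖ)` with `α = (d, y, α_3, …)` to `(α', β', γ, ϖ)`, where `α' = (y, y, α_3, …, 1)`
and `β'` is `β` with one extra part `d - y`. The weight changes by `-d + y + 1 + (d - y) = 1`,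
both `ℓ(α)` and `ℓ(β)` grow by one, the new parts are at most `d = d_{k-1}`, and the parity
condition on `α_1 - α_2` becomes the one on `d_1 - α'_1`. The map is injective on the first
set because `α_1 = d_1` is recovered from `ϖ` and the inserted part `d - y` from `α'` and `ϖ`.
-/

/-- A partition: a finite nonincreasing list of positive integers. -/
structure Partn where
  parts : List ℕ
  sorted : parts.Pairwise (· ≥ ·)
  pos : ∀ x ∈ parts, 0 < x

namespace Partn

/-- The weight `|λ|` of a partition: the sum of its parts. -/
def wt (p : Partn) : ℕ := p.parts.sum

/-- The length `ℓ(λ)`: the number of parts. -/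
def len (p : Partn) : ℕ := p.parts.length

/-- The `j`-th largest part `λ_j` (1-indexed), with `λ_j = 0` for `j > ℓ(λ)`. -/
def part (p : Partn) (j : ℕ) : ℕ := p.parts.getD (j - 1) 0

/-- `f_j(λ)`: the number of parts of `λ` equal to `j`. -/
def freq (p : Partn) (j : ℕ) : ℕ := p.parts.count j

/-- The empty partition. -/
def empty : Partn := ⟨[], List.Pairwise.nil, by simp⟩

end Partn

/-- The type of `(2k-1)`-tuples `(α, β, γ^1, …, γ^{k-2}, ϖ^1, …, ϖ^{k-1})`. -/
abbrev PTuple (k : ℕ) : Type :=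
  Partn × Partn × (Fin (k - 2) → Partn) × (Fin (k - 1) → Partn)

/-- `d_j := ℓ(ϖ^j)` (1-indexed, `0` out of range). -/
def dIdx (k : ℕ) (w : Fin (k - 1) → Partn) (j : ℕ) : ℕ :=
  if h : j - 1 < k - 1 then (w ⟨j - 1, h⟩).len else 0

/-- `γ^j` (1-indexed, the empty partition out of range). -/
def gIdx (k : ℕ) (g : Fin (k - 2) → Partn) (j : ℕ) : Partn :=
  if h : j - 1 < k - 2 then g ⟨j - 1, h⟩ else Partn.empty

/-- Membership in Garvan-type set `P_k(m, n)` of `(2k-1)`-tuples of partitions. -/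
def PkMem (k : ℕ) (m : ℤ) (n : ℕ) (t : PTuple k) : Prop :=
  (∀ i : Fin (k - 1), (t.2.2.2 i).parts =
      List.replicate (t.2.2.2 i).len (t.2.2.2 i).len) ∧
  (∀ j, 1 ≤ j → j + 1 ≤ k - 1 → dIdx k t.2.2.2 (j + 1) ≤ dIdx k t.2.2.2 j) ∧
  1 ≤ dIdx k t.2.2.2 (k - 1) ∧
  (∀ x ∈ t.1.parts, x ≤ dIdx k t.2.2.2 (k - 1)) ∧
  (∀ x ∈ t.2.1.parts, x ≤ dIdx k t.2.2.2 (k - 1)) ∧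
  (t.1.len : ℤ) - (t.2.1.len : ℤ) = m ∧
  (∀ j, 1 ≤ j → j ≤ k - 2 →
      (gIdx k t.2.2.1 j).len ≤ dIdx k t.2.2.2 j - dIdx k t.2.2.2 (j + 1)) ∧
  t.1.wt + t.2.1.wt + (∑ i, (t.2.2.1 i).wt) + (∑ i, (t.2.2.2 i).wt) = n

namespace Partn

theorem ext_parts {p q : Partn} (h : p.parts = q.parts) : p = q := by
  cases p; cases q; simpa using h

theorem len_le_wt (p : Partn) : p.len ≤ p.wt :=
  List.length_le_sum_of_one_le _ p.pos

theorem finite_setOf_wt_le (N : ℕ) : {p : Partn | p.wt ≤ N}.Finite := by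
  refine Set.Finite.of_finite_image ?_ fun p _ q _ h => ext_parts h
  refine ((List.finite_length_le (Fin (N + 1)) N).image (List.map Fin.val)).subset ?_
  rintro _ ⟨p, hp, rfl⟩
  have hlt : ∀ x ∈ p.parts, x < N + 1 := fun x hx =>
    Nat.lt_succ_of_le ((List.le_sum_of_mem hx).trans hp)
  refine ⟨p.parts.pmap Fin.mk hlt, ?_, by simp [List.map_pmap]⟩
  rw [Set.mem_ofPred_eq, List.length_pmap]
  exact p.len_le_wt.trans hp

theorem exists_parts_eq_of_part_two_pos {p : Partn} (h : 0 < p.part 2) :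
    ∃ x y r, p.parts = x :: y :: r := by
  rcases hp : p.parts with _ | ⟨x, _ | ⟨y, r⟩⟩ <;> simp_all [part]

theorem part_one_eq {p : Partn} {x y : ℕ} {r : List ℕ} (h : p.parts = x :: y :: r) :
    p.part 1 = x := by
  simp [part, h]

theorem part_two_eq {p : Partn} {x y : ℕ} {r : List ℕ} (h : p.parts = x :: y :: r) :
    p.part 2 = y := by
  simp [part, h]

def flattenTopList : List ℕ → List ℕ
  | _ :: y :: r => y :: y :: (r ++ [1])
  | l => l

theorem pairwise_flattenTopList {l : List ℕ} (hs : l.Pairwise (· ≥ ·)) (hp : ∀ x ∈ l, 0 < x) :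
    (flattenTopList l).Pairwise (· ≥ ·) := by
  match l with
  | [] | [_] => exact hs
  | _ :: y :: r =>
    simp only [flattenTopList, List.pairwise_cons, List.pairwise_append, List.mem_cons,
      List.mem_append] at hs hp ⊢
    grind

theorem pos_of_mem_flattenTopList {l : List ℕ} (hp : ∀ x ∈ l, 0 < x) :
    ∀ x ∈ flattenTopList l, 0 < x := by
  match l with
  | [] | [_] => exact hp
  | _ :: y :: r =>
    simp only [flattenTopList, List.mem_cons, List.mem_append] at hp ⊢
    grind

def flattenTop (p : Partn) : Partn :=
  ⟨flattenTopList p.parts, pairwise_flattenTopList p.sorted p.pos,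
    pos_of_mem_flattenTopList p.pos⟩

theorem parts_flattenTop {p : Partn} {x y : ℕ} {r : List ℕ} (h : p.parts = x :: y :: r) :
    p.flattenTop.parts = y :: y :: (r ++ [1]) := by
  simp [flattenTop, flattenTopList, h]

theorem mem_flattenTop {p : Partn} {x : ℕ} (hx : x ∈ p.flattenTop.parts) :
    x ∈ p.parts ∨ x = 1 := by
  rcases hp : p.parts with _ | ⟨a, _ | ⟨b, r⟩⟩ <;>
    simp only [flattenTop, flattenTopList, hp] at hx <;> grind

theorem len_flattenTop {p : Partn} {x y : ℕ} {r : List ℕ} (h : p.parts = x :: y :: r) :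
    p.flattenTop.len = p.len + 1 := by
  simp [len, parts_flattenTop h, h]

theorem wt_flattenTop {p : Partn} {x y : ℕ} {r : List ℕ} (h : p.parts = x :: y :: r) :
    p.flattenTop.wt + x = p.wt + y + 1 := by
  simp only [wt, parts_flattenTop h, h, List.sum_cons, List.sum_append, List.sum_nil]
  omega

theorem flattenTop_inj {p q : Partn} {x y y' : ℕ} {r r' : List ℕ} (hp : p.parts = x :: y :: r)
    (hq : q.parts = x :: y' :: r') (h : p.flattenTop = q.flattenTop) : p = q := by
  have h' := congrArg parts h
  rw [parts_flattenTop hp, parts_flattenTop hq] at h'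
  simp only [List.cons.injEq, List.append_cancel_right_eq] at h'
  exact ext_parts (by rw [hp, hq, h'.1, h'.2.2])

/-- Inserts the part `b`, or `1` if `b = 0`. -/
def insertPart (b : ℕ) (p : Partn) : Partn :=
  ⟨p.parts.orderedInsert (· ≥ ·) (max 1 b), p.sorted.orderedInsert _ _, by
    intro x hx
    rcases (List.mem_orderedInsert _).mp hx with rfl | hx
    · positivity
    · exact p.pos x hx⟩

theorem parts_insertPart_perm (b : ℕ) (p : Partn) :
    (p.insertPart b).parts.Perm (max 1 b :: p.parts) :=
  List.perm_orderedInsert _ _ _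

theorem insertPart_injective (b : ℕ) : Function.Injective (insertPart b) := fun p q h =>
  ext_parts <| List.Perm.eq_of_pairwise' p.sorted q.sorted <|
    ((parts_insertPart_perm b p).symm.trans (h ▸ parts_insertPart_perm b q)).cons_inv

theorem wt_insertPart {b : ℕ} (hb : 0 < b) (p : Partn) : (p.insertPart b).wt = b + p.wt := by
  simpa [wt, max_eq_right (Nat.succ_le_of_lt hb)] using (parts_insertPart_perm b p).sum_eq

theorem len_insertPart (b : ℕ) (p : Partn) : (p.insertPart b).len = p.len + 1 := by
  simpa [len] using (parts_insertPart_perm b p).length_eq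

theorem mem_insertPart {b x : ℕ} (hb : 0 < b) {p : Partn} (hx : x ∈ (p.insertPart b).parts) :
    x = b ∨ x ∈ p.parts := by
  simpa [max_eq_right (Nat.succ_le_of_lt hb)] using (parts_insertPart_perm b p).subset hx

end Partn

namespace PTuple

def wt {k : ℕ} (t : PTuple k) : ℕ :=
  t.1.wt + t.2.1.wt + (∑ i, (t.2.2.1 i).wt) + (∑ i, (t.2.2.2 i).wt)

theorem finite_setOf_wt_eq (k N : ℕ) : {t : PTuple k | t.wt = N}.Finite := by
  have hN := Partn.finite_setOf_wt_le N
  refine (hN.prod <| hN.prod <|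
    (Set.Finite.pi fun _ => hN).prod (Set.Finite.pi fun _ => hN)).subset ?_
  rintro ⟨a, b, g, w⟩ ht
  simp only [Set.mem_ofPred_eq, wt] at ht
  have hg (i) : (g i).wt ≤ ∑ j, (g j).wt :=
    Finset.single_le_sum (fun j _ => Nat.zero_le (g j).wt) (Finset.mem_univ i)
  have hw (i) : (w i).wt ≤ ∑ j, (w j).wt :=
    Finset.single_le_sum (fun j _ => Nat.zero_le (w j).wt) (Finset.mem_univ i)
  simp only [Set.mem_prod, Set.mem_univ_pi, Set.mem_ofPred_eq]
  refine ⟨by omega, by omega, fun i => ?_, fun i => ?_⟩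
  · have := hg i; omega
  · have := hw i; omega

end PTuple

theorem PkMem.replace_fst_snd {k : ℕ} {m : ℤ} {n e : ℕ} {a b a' b' : Partn}
    {g : Fin (k - 2) → Partn} {w : Fin (k - 1) → Partn} (h : PkMem k m n (a, b, g, w))
    (ha : ∀ x ∈ a'.parts, x ≤ dIdx k w (k - 1)) (hb : ∀ x ∈ b'.parts, x ≤ dIdx k w (k - 1))
    (hlen : a'.len + b.len = a.len + b'.len) (hwt : a'.wt + b'.wt = a.wt + b.wt + e) :
    PkMem k m (n + e) (a', b', g, w) := by
  obtain ⟨hw, hmono, hd, -, -, hm, hγ, hn⟩ := h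
  dsimp only at hm hn
  exact ⟨hw, hmono, hd, ha, hb, by dsimp only; omega, hγ, by dsimp only; omega⟩

def distinctTopSet (k : ℕ) (m : ℤ) (n : ℕ) : Set (PTuple k) :=
  {t : PTuple k | PkMem k m n t ∧
    dIdx k t.2.2.2 1 = dIdx k t.2.2.2 (k - 1) ∧ 2 ≤ dIdx k t.2.2.2 1 ∧
    t.1.part 1 = dIdx k t.2.2.2 1 ∧ t.1.part 2 < t.1.part 1 ∧
    1 ≤ t.1.part 2 ∧ Even (t.1.part 1 - t.1.part 2)}

def repeatedTopSet (k : ℕ) (m : ℤ) (n : ℕ) : Set (PTuple k) :=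
  {t : PTuple k | PkMem k m n t ∧
    dIdx k t.2.2.2 1 = dIdx k t.2.2.2 (k - 1) ∧ 2 ≤ dIdx k t.2.2.2 1 ∧
    1 ≤ t.1.part 1 ∧ t.1.part 1 = t.1.part 2 ∧
    t.1.part 1 < dIdx k t.2.2.2 1 ∧
    Even (dIdx k t.2.2.2 1 - t.1.part 1)}

def moveTop (k : ℕ) (t : PTuple k) : PTuple k :=
  (t.1.flattenTop, t.2.1.insertPart (dIdx k t.2.2.2 1 - t.1.part 2), t.2.2.1, t.2.2.2)

theorem mapsTo_moveTop (k : ℕ) (m : ℤ) (n : ℕ) :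
    Set.MapsTo (moveTop k) (distinctTopSet k m n) (repeatedTopSet k m (n + 1)) := by
  rintro ⟨α, β, γ, w⟩ ⟨hmem, hdd, hd2, hx, hxy, hy, heven⟩
  obtain ⟨x, y, r, hα⟩ := Partn.exists_parts_eq_of_part_two_pos (p := α) hy
  have hα' := Partn.parts_flattenTop hα
  simp only [Partn.part_one_eq hα, Partn.part_two_eq hα] at hx hxy hy heven
  have hgap : 0 < dIdx k w 1 - y := by omega
  have hαbound : ∀ z ∈ α.parts, z ≤ dIdx k w (k - 1) := hmem.2.2.2.1
  have hβbound : ∀ z ∈ β.parts, z ≤ dIdx k w (k - 1) := hmem.2.2.2.2.1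
  have hd : 1 ≤ dIdx k w (k - 1) := hmem.2.2.1
  have hdd' : dIdx k w 1 = dIdx k w (k - 1) := hdd
  simp only [moveTop, repeatedTopSet, Set.mem_ofPred_eq, Partn.part_one_eq hα',
    Partn.part_two_eq hα, Partn.part_two_eq hα']
  refine ⟨hmem.replace_fst_snd ?_ ?_ ?_ ?_, hdd, hd2, hy, trivial, by omega, by rwa [← hx]⟩
  · exact fun z hz => (Partn.mem_flattenTop hz).elim (hαbound z) fun h => h ▸ hd
  · exact fun z hz => (Partn.mem_insertPart hgap hz).elim (fun h => by omega) (hβbound z)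
  · rw [Partn.len_flattenTop hα, Partn.len_insertPart]
    omega
  · have := Partn.wt_flattenTop hα
    rw [Partn.wt_insertPart hgap]
    omega

theorem injOn_moveTop (k : ℕ) (m : ℤ) (n : ℕ) : Set.InjOn (moveTop k) (distinctTopSet k m n) := by
  rintro ⟨α₁, β₁, γ₁, w₁⟩ ⟨-, -, -, hx₁, -, hy₁, -⟩ ⟨α₂, β₂, γ₂, w₂⟩ ⟨-, -, -, hx₂, -, hy₂, -⟩ h
  simp only [moveTop, Prod.mk.injEq] at h
  obtain ⟨hα, hβ, rfl, rfl⟩ := h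
  obtain ⟨x₁, y₁, r₁, h₁⟩ := Partn.exists_parts_eq_of_part_two_pos (p := α₁) hy₁
  obtain ⟨x₂, y₂, r₂, h₂⟩ := Partn.exists_parts_eq_of_part_two_pos (p := α₂) hy₂
  obtain rfl : x₁ = x₂ := by
    rw [← Partn.part_one_eq h₁, ← Partn.part_one_eq h₂]
    exact hx₁.trans hx₂.symm
  obtain rfl := Partn.flattenTop_inj h₁ h₂ hα
  obtain rfl := Partn.insertPart_injective _ hβ
  rfl

theorem lem_pp9_general (k : ℕ) (m : ℤ) (n : ℕ) :
    {t : PTuple k | PkMem k m n t ∧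
        dIdx k t.2.2.2 1 = dIdx k t.2.2.2 (k - 1) ∧ 2 ≤ dIdx k t.2.2.2 1 ∧
        t.1.part 1 = dIdx k t.2.2.2 1 ∧ t.1.part 2 < t.1.part 1 ∧
        1 ≤ t.1.part 2 ∧ Even (t.1.part 1 - t.1.part 2)}.ncard ≤
      {t : PTuple k | PkMem k m (n + 1) t ∧
        dIdx k t.2.2.2 1 = dIdx k t.2.2.2 (k - 1) ∧ 2 ≤ dIdx k t.2.2.2 1 ∧
        1 ≤ t.1.part 1 ∧ t.1.part 1 = t.1.part 2 ∧
        t.1.part 1 < dIdx k t.2.2.2 1 ∧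
        Even (dIdx k t.2.2.2 1 - t.1.part 1)}.ncard :=
  Set.ncard_le_ncard_of_injOn (moveTop k) (mapsTo_moveTop k m n) (injOn_moveTop k m n)
    ((PTuple.finite_setOf_wt_eq k (n + 1)).subset fun _ ht => ht.1.2.2.2.2.2.2.2)

/-- Lemma 5.12 (restated). -/
theorem lem_pp9 (k : ℕ) (m : ℤ) (n : ℕ) (hk : 3 ≤ k) (hm : 0 ≤ m)
    (hn : k - 1 ≤ n) :
    {t : PTuple k | PkMem k m n t ∧
        dIdx k t.2.2.2 1 = dIdx k t.2.2.2 (k - 1) ∧ 2 ≤ dIdx k t.2.2.2 1 ∧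
        t.1.part 1 = dIdx k t.2.2.2 1 ∧ t.1.part 2 < t.1.part 1 ∧
        1 ≤ t.1.part 2 ∧ Even (t.1.part 1 - t.1.part 2)}.ncard ≤
      {t : PTuple k | PkMem k m (n + 1) t ∧
        dIdx k t.2.2.2 1 = dIdx k t.2.2.2 (k - 1) ∧ 2 ≤ dIdx k t.2.2.2 1 ∧
        1 ≤ t.1.part 1 ∧ t.1.part 1 = t.1.part 2 ∧
        t.1.part 1 < dIdx k t.2.2.2 1 ∧
        Even (dIdx k t.2.2.2 1 - t.1.part 1)}.ncard :=
  lem_pp9_general k m n
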